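/- Consider the response-function SCM for binary X → Z with noise distribution P(N_Z) = (λ_X, 1−p00−p01+λ_X, p00−λ_X, p01−λ_X) over functions {0,1,ID,NOT}, where N_Z ⫫ X with P(X=0) = q. Then the conditional entropy satisfies H(Z | N_Z) = H(X)·(p00 + p01 − 2λ_X), and consequently I(N_Z ; Z) = H(Z) − H(X)·(p00 + p01 − 2λ_X). -/

import Mathlib

open Finset

/-- Probability of the event `U = u` under the pmf `p` on a finite sample space. -/
noncomputable def pr {Ω : Type*} [Fintype Ω] (p : Ω → ℝ) {α : Type*} [DecidableEq α]
    (U : Ω → α) (u : α) : ℝ :=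
  ∑ ω ∈ univ.filter (fun ω => U ω = u), p ω

/-- Shannon entropy of a discrete random variable `U` under pmf `p`. -/
noncomputable def ent {Ω : Type*} [Fintype Ω] (p : Ω → ℝ) {α : Type*} [Fintype α]
    [DecidableEq α] (U : Ω → α) : ℝ :=
  ∑ u, Real.negMulLog (pr p U u)

/-- Conditional entropy `H(U | V)`. -/
noncomputable def condEnt {Ω : Type*} [Fintype Ω] (p : Ω → ℝ) {α β : Type*}
    [Fintype α] [DecidableEq α] [Fintype β] [DecidableEq β]
    (U : Ω → α) (V : Ω → β) : ℝ :=
  ent p (fun ω => (U ω, V ω)) - ent p V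

/-- Mutual information `I(U;W)`. -/
noncomputable def mi {Ω : Type*} [Fintype Ω] (p : Ω → ℝ) {α β : Type*}
    [Fintype α] [DecidableEq α] [Fintype β] [DecidableEq β]
    (U : Ω → α) (W : Ω → β) : ℝ :=
  ent p U + ent p W - ent p (fun ω => (U ω, W ω))

/-- Conditional mutual information `I(U;W | V)`. -/
noncomputable def cmi {Ω : Type*} [Fintype Ω] (p : Ω → ℝ) {α β γ : Type*}
    [Fintype α] [DecidableEq α] [Fintype β] [DecidableEq β] [Fintype γ] [DecidableEq γ]
    (U : Ω → α) (W : Ω → β) (V : Ω → γ) : ℝ :=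
  ent p (fun ω => (U ω, V ω)) + ent p (fun ω => (W ω, V ω))
    - ent p (fun ω => (U ω, W ω, V ω)) - ent p V

/-- `p` is a probability mass function. -/
def IsPMF {Ω : Type*} [Fintype Ω] (p : Ω → ℝ) : Prop :=
  (∀ ω, 0 ≤ p ω) ∧ ∑ ω, p ω = 1

/-- `U` and `V` are independent under `p`. -/
def Indep {Ω : Type*} [Fintype Ω] (p : Ω → ℝ) {α β : Type*} [DecidableEq α] [DecidableEq β]
    (U : Ω → α) (V : Ω → β) : Prop :=
  ∀ u v, pr p (fun ω => (U ω, V ω)) (u, v) = pr p U u * pr p V v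

/-- The four binary response functions `{const-0, const-1, ID, NOT}`. -/
def RF : Fin 4 → Bool → Bool := ![fun _ => false, fun _ => true, id, fun b => !b]

/-- Response-function weights `(λ, 1−p00−p01+λ, p00−λ, p01−λ)`. -/
noncomputable def scmWeights (lam p00 p01 : ℝ) : Fin 4 → ℝ :=
  ![lam, 1 - p00 - p01 + lam, p00 - lam, p01 - lam]

/-- Joint pmf of `(X, N_Z)` with `P(X = 0) = q` and `N_Z ⫫ X` distributed by the
response-function weights; `Z = N_Z(X)` is then `RF ω.2 ω.1`. -/
noncomputable def scmPMF (q lam p00 p01 : ℝ) : Bool × Fin 4 → ℝ :=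
  fun ω => (if ω.1 = false then q else 1 - q) * scmWeights lam p00 p01 ω.2

/-! Since `N_Z` is independent of `X`, `P(Z = z, N_Z = n) = P(N_Z = n) · P(f_n(X) = z)`, and
`negMulLog (x * y) = y * negMulLog x + x * negMulLog y` splits the joint entropy, giving
`H(Z | N_Z) = ∑ n, P(N_Z = n) · H(f_n(X))`. The constant responses contribute `0`, while `ID`
and the bijection `NOT` contribute `H(X)`, with total weight `p00 + p01 − 2λ`. Finally
`I(N_Z ; Z) = H(Z) − H(Z | N_Z)` because the joint entropy is symmetric. -/

section Entropy

variable {Ω α β : Type*} [Fintype Ω] (p : Ω → ℝ)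

theorem sum_pr [Fintype α] [DecidableEq α] (U : Ω → α) : ∑ u, pr p U u = ∑ ω, p ω :=
  Finset.sum_fiberwise univ U p

theorem ent_const [Fintype α] [DecidableEq α] (hp : ∑ ω, p ω = 1) (c : α) :
    ent p (fun _ => c) = 0 := by
  rw [ent, Finset.sum_eq_single c (fun u _ hu => by simp [pr, Ne.symm hu])
    (fun h => absurd (mem_univ c) h)]
  simp [pr, hp]

theorem ent_equiv_comp [Fintype α] [DecidableEq α] [Fintype β] [DecidableEq β]
    (e : α ≃ β) (U : Ω → α) : ent p (fun ω => e (U ω)) = ent p U := by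
  rw [ent, ← e.sum_comp]
  simp only [pr, e.apply_eq_iff_eq, ent]

theorem ent_pair_comm [Fintype α] [DecidableEq α] [Fintype β] [DecidableEq β]
    (U : Ω → α) (V : Ω → β) :
    ent p (fun ω => (V ω, U ω)) = ent p (fun ω => (U ω, V ω)) :=
  ent_equiv_comp p (Equiv.prodComm α β) (fun ω => (U ω, V ω))

theorem mi_eq_ent_sub_condEnt [Fintype α] [DecidableEq α] [Fintype β] [DecidableEq β]
    (U : Ω → α) (V : Ω → β) : mi p V U = ent p U - condEnt p U V := by
  rw [mi, condEnt, ent_pair_comm]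
  ring

end Entropy

section ProductPMF

variable {α β γ : Type*} [Fintype α] [Fintype β] (a : α → ℝ) (w : β → ℝ)

theorem pr_prod_fst [DecidableEq α] (x : α) :
    pr (fun ω : α × β => a ω.1 * w ω.2) Prod.fst x = a x * ∑ n, w n := by
  simp [pr, Finset.sum_filter, Fintype.sum_prod_type, Finset.mul_sum]

theorem pr_prod_snd [DecidableEq β] (n : β) :
    pr (fun ω : α × β => a ω.1 * w ω.2) Prod.snd n = w n * ∑ x, a x := by
  simp [pr, Finset.sum_filter, Fintype.sum_prod_type, Finset.mul_sum, mul_comm]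

theorem pr_response_snd [DecidableEq β] [DecidableEq γ] (f : β → α → γ) (z : γ) (n : β) :
    pr (fun ω : α × β => a ω.1 * w ω.2) (fun ω => (f ω.2 ω.1, ω.2)) (z, n) =
      w n * pr a (f n) z := by
  simp [pr, Finset.sum_filter, Fintype.sum_prod_type, Finset.mul_sum, and_comm, ite_and, mul_comm]

theorem ent_prod_fst [DecidableEq α] (hw : ∑ n, w n = 1) :
    ent (fun ω : α × β => a ω.1 * w ω.2) Prod.fst = ent a id := by
  simp only [ent, pr_prod_fst, hw, mul_one]
  simp [pr, Finset.sum_filter]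

theorem condEnt_response_snd [DecidableEq β] [Fintype γ] [DecidableEq γ] (ha : ∑ x, a x = 1)
    (f : β → α → γ) :
    condEnt (fun ω : α × β => a ω.1 * w ω.2) (fun ω => f ω.2 ω.1) Prod.snd =
      ∑ n, w n * ent a (f n) := by
  have h_joint : ent (fun ω : α × β => a ω.1 * w ω.2) (fun ω => (f ω.2 ω.1, ω.2)) =
      ∑ n, (Real.negMulLog (w n) + w n * ent a (f n)) := by
    rw [ent, Fintype.sum_prod_type, Finset.sum_comm]
    refine Finset.sum_congr rfl fun n _ => ?_
    simp only [pr_response_snd, Real.negMulLog_mul, Finset.sum_add_distrib, ← Finset.sum_mul,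
      ← Finset.mul_sum, sum_pr, ha, one_mul, ent]
  have h_snd : ent (fun ω : α × β => a ω.1 * w ω.2) Prod.snd = ∑ n, Real.negMulLog (w n) := by
    simp only [ent, pr_prod_snd, ha, mul_one]
  rw [condEnt, h_joint, h_snd, Finset.sum_add_distrib, add_sub_cancel_left]

end ProductPMF

section ResponseFunctions

theorem sum_scmWeights (lam p00 p01 : ℝ) : ∑ n, scmWeights lam p00 p01 n = 1 := by
  simp only [Fin.sum_univ_four, scmWeights, Matrix.cons_val]
  ring

theorem sum_scmWeights_mul_ent_RF (a : Bool → ℝ) (ha : ∑ x, a x = 1) (lam p00 p01 : ℝ) :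
    ∑ n, scmWeights lam p00 p01 n * ent a (RF n) = ent a id * (p00 + p01 - 2 * lam) := by
  have h_not : ent a (fun x => !x) = ent a id := ent_equiv_comp a Equiv.boolNot id
  simp only [Fin.sum_univ_four, scmWeights, RF, Matrix.cons_val, ent_const a ha, h_not]
  ring

end ResponseFunctions

theorem condEnt_and_mi_of_response_scm_general
    (q lam p00 p01 : ℝ)
    (p : Bool × Fin 4 → ℝ) (hp : p = scmPMF q lam p00 p01)
    (X : Bool × Fin 4 → Bool) (hX : X = fun ω => ω.1)
    (N : Bool × Fin 4 → Fin 4) (hN : N = fun ω => ω.2)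
    (Z : Bool × Fin 4 → Bool) (hZ : Z = fun ω => RF ω.2 ω.1) :
    condEnt p Z N = ent p X * (p00 + p01 - 2 * lam) ∧
    mi p N Z = ent p Z - ent p X * (p00 + p01 - 2 * lam) := by
  subst hp hX hN hZ
  set a : Bool → ℝ := fun x => if x = false then q else 1 - q
  have ha : ∑ x, a x = 1 := by simp [a]
  have h_ent_X : ent (scmPMF q lam p00 p01) (fun ω => ω.1) = ent a id :=
    ent_prod_fst a _ (sum_scmWeights lam p00 p01)
  have h_condEnt : condEnt (scmPMF q lam p00 p01) (fun ω => RF ω.2 ω.1) (fun ω => ω.2) =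
      ent a id * (p00 + p01 - 2 * lam) :=
    (condEnt_response_snd a _ ha RF).trans (sum_scmWeights_mul_ent_RF a ha lam p00 p01)
  rw [h_ent_X, mi_eq_ent_sub_condEnt, h_condEnt]
  exact ⟨rfl, rfl⟩

/-- in the binary response-function SCM parameterized by `λ_X`,
`H(Z | N_Z) = H(X)·(p00 + p01 − 2λ_X)` and hence
`I(N_Z ; Z) = H(Z) − H(X)·(p00 + p01 − 2λ_X)`. -/
theorem condEnt_and_mi_of_response_scm
    (q lam p00 p01 : ℝ) (hq : q ∈ Set.Ioo (0 : ℝ) 1)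
    (hp00 : p00 ∈ Set.Icc (0 : ℝ) 1) (hp01 : p01 ∈ Set.Icc (0 : ℝ) 1)
    (hlam : lam ∈ Set.Icc (max 0 (p00 + p01 - 1)) (min p00 p01))
    (p : Bool × Fin 4 → ℝ) (hp : p = scmPMF q lam p00 p01)
    (X : Bool × Fin 4 → Bool) (hX : X = fun ω => ω.1)
    (N : Bool × Fin 4 → Fin 4) (hN : N = fun ω => ω.2)
    (Z : Bool × Fin 4 → Bool) (hZ : Z = fun ω => RF ω.2 ω.1) :
    condEnt p Z N = ent p X * (p00 + p01 - 2 * lam) ∧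
    mi p N Z = ent p Z - ent p X * (p00 + p01 - 2 * lam) :=
  condEnt_and_mi_of_response_scm_general q lam p00 p01 p hp X hX N hN Z hZ
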